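/- Fix G ∈ ℂ^{N×M}, channel vectors h_1, …, h_K ∈ ℂ^M, SINR thresholds Γ_k > 0, noise powers σ_k² > 0, and power budget P_0 > 0. Define the relaxed feasible set S'_SDR as all tuples (W_1, …, W_K, R) of Hermitian positive semidefinite M×M matrices with (1/Γ_k) h_k^H W_k h_k − Σ_{i≠k} h_k^H W_i h_k ≥ σ_k² for all k and Σ_k tr(W_k) + tr(R) ≤ P_0, and define S_2 ⊆ S'_SDR as those tuples additionally satisfying rank(W_k) ≤ 1 for all k. Suppose (W̄_1, …, W̄_K, R̄) ∈ S'_SDR minimizes f(W_1, …, W_K, R) = tr((G(Σ_k W_k + R)G^H)^{-1}) over S'_SDR, with G(Σ_k W̄_k + R̄)G^H invertible. Then the tuple (W*_1, …, W*_K, R*) with W*_k = w*_k(w*_k)^H, w*_k = (h_k^H W̄_k h_k)^{-1/2} W̄_k h_k, and R* = R̄ + Σ_k(W̄_k − W*_k) belongs to S_2 and achieves the same objective value; consequently the infimum of f over S_2 equals the infimum of f over S'_SDR. -/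

import Mathlib

open Matrix ComplexOrder

lemma cs_dot {m : ℕ} (u v : Fin m → ℂ) :
    Complex.normSq (star u ⬝ᵥ v) ≤ (star u ⬝ᵥ u).re * (star v ⬝ᵥ v).re := by
  have h := inner_mul_inner_self_le (𝕜 := ℂ) (E := EuclideanSpace ℂ (Fin m))
      ((WithLp.equiv 2 _).symm u) ((WithLp.equiv 2 _).symm v)
  simp only [WithLp.equiv_symm_apply, EuclideanSpace.inner_toLp_toLp, RCLike.re_to_complex] at h
  rw [dotProduct_comm v (star u), dotProduct_comm u (star v), dotProduct_comm u (star u),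
    dotProduct_comm v (star v)] at h
  have hsym : star v ⬝ᵥ u = star (star u ⬝ᵥ v) := star_dotProduct v u
  rw [hsym, norm_star] at h
  calc Complex.normSq (star u ⬝ᵥ v)
      = ‖star u ⬝ᵥ v‖ * ‖star u ⬝ᵥ v‖ := by
        rw [Complex.normSq_eq_norm_sq, sq]
    _ ≤ _ := h

lemma dot_vmv {m : ℕ} (u v x y : Fin m → ℂ) :
    star x ⬝ᵥ (vecMulVec u v) *ᵥ y = (star x ⬝ᵥ u) * (v ⬝ᵥ y) := by
  simp only [dotProduct, mulVec, vecMulVec_apply, Pi.star_apply, Finset.mul_sum,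
    Finset.sum_mul, dotProduct]
  rw [Finset.sum_comm]
  refine Finset.sum_congr rfl fun i _ => Finset.sum_congr rfl fun j _ => ?_
  ring

lemma herm_vmv {m : ℕ} (u : Fin m → ℂ) : (vecMulVec u (star u)).IsHermitian := by
  ext i j
  simp [Matrix.IsHermitian, conjTranspose_apply, vecMulVec_apply, mul_comm]

lemma psd_vmv {m : ℕ} (u : Fin m → ℂ) : (vecMulVec u (star u)).PosSemidef := by
  refine .of_dotProduct_mulVec_nonneg (herm_vmv u) fun x => ?_
  rw [dot_vmv, star_dotProduct u x]
  exact mul_star_self_nonneg _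

lemma key {m : ℕ} {W : Matrix (Fin m) (Fin m) ℂ} (hW : W.PosSemidef) (h : Fin m → ℂ) :
    (W - vecMulVec ((((Real.sqrt ((star h ⬝ᵥ W *ᵥ h).re))⁻¹ : ℝ) : ℂ) • (W *ᵥ h))
        (star ((((Real.sqrt ((star h ⬝ᵥ W *ᵥ h).re))⁻¹ : ℝ) : ℂ) • (W *ᵥ h)))).PosSemidef ∧
    star h ⬝ᵥ (vecMulVec ((((Real.sqrt ((star h ⬝ᵥ W *ᵥ h).re))⁻¹ : ℝ) : ℂ) • (W *ᵥ h))
        (star ((((Real.sqrt ((star h ⬝ᵥ W *ᵥ h).re))⁻¹ : ℝ) : ℂ) • (W *ᵥ h)))) *ᵥ h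
      = star h ⬝ᵥ W *ᵥ h := by
  set u : Fin m → ℂ := W *ᵥ h with hu
  set c : ℝ := (star h ⬝ᵥ W *ᵥ h).re with hcdef
  set r : ℝ := (Real.sqrt c)⁻¹ with hrdef
  have hc0 : 0 ≤ c := hW.re_dotProduct_nonneg h
  have hch : star h ⬝ᵥ W *ᵥ h = (c : ℂ) := by
    have him := (Complex.nonneg_iff.mp (hW.dotProduct_mulVec_nonneg h)).2
    exact Complex.ext rfl (by simpa using him.symm)
  -- quadratic form of the rank-one matrix
  have quad : ∀ x : Fin m → ℂ, star x ⬝ᵥ (vecMulVec ((r : ℂ) • u) (star ((r : ℂ) • u))) *ᵥ x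
      = ((r ^ 2 * Complex.normSq (star x ⬝ᵥ u) : ℝ) : ℂ) := by
    intro x
    rw [dot_vmv]
    have h1 : star x ⬝ᵥ ((r : ℂ) • u) = (r : ℂ) * (star x ⬝ᵥ u) := dotProduct_smul _ _ _
    have h2 : star ((r : ℂ) • u) ⬝ᵥ x = (r : ℂ) * star (star x ⬝ᵥ u) := by
      rw [star_smul, smul_dotProduct, star_dotProduct u x, Complex.star_def,
        Complex.conj_ofReal]
      rfl
    rw [h1, h2]
    have h3 : (star x ⬝ᵥ u) * star (star x ⬝ᵥ u)
        = (Complex.normSq (star x ⬝ᵥ u) : ℂ) := by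
      rw [Complex.star_def, Complex.mul_conj]
    calc ((r : ℂ) * (star x ⬝ᵥ u)) * ((r : ℂ) * star (star x ⬝ᵥ u))
        = (r : ℂ) * (r : ℂ) * ((star x ⬝ᵥ u) * star (star x ⬝ᵥ u)) := by ring
      _ = ((r ^ 2 * Complex.normSq (star x ⬝ᵥ u) : ℝ) : ℂ) := by
          rw [h3]; push_cast; ring
  -- the key bound
  have bound : ∀ x : Fin m → ℂ,
      r ^ 2 * Complex.normSq (star x ⬝ᵥ u) ≤ (star x ⬝ᵥ W *ᵥ x).re := by
    intro x
    rcases eq_or_lt_of_le hc0 with hc | hc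
    · have hu0 : u = 0 := by
        rw [hu]
        exact (hW.dotProduct_mulVec_zero_iff h).mp (by rw [hch, ← hc]; simp)
      simpa [hu0] using hW.re_dotProduct_nonneg x
    · have ht : r ^ 2 = c⁻¹ := by
        rw [hrdef, inv_pow, Real.sq_sqrt hc0]
      classical
      set S := (open scoped MatrixOrder in CFC.sqrt W) with hS
      have hWS : S * S = W := by open scoped MatrixOrder in exact CFC.sqrt_mul_sqrt_self W hW.nonneg
      have hz : ∀ a b : Fin m → ℂ, star a ⬝ᵥ W *ᵥ b = star (S *ᵥ a) ⬝ᵥ (S *ᵥ b) := by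
        intro a b
        rw [star_mulVec, ← dotProduct_mulVec, (open scoped MatrixOrder in (CFC.sqrt_nonneg W).posSemidef).1, mulVec_mulVec, hWS]
      have hcs := cs_dot (S *ᵥ x) (S *ᵥ h)
      rw [← hz x h, ← hz x x, ← hz h h, ← hu, hch] at hcs
      have hcre : ((c : ℂ)).re = c := by simp
      rw [hcre] at hcs
      rw [ht]
      have hq0 : 0 ≤ (star x ⬝ᵥ W *ᵥ x).re := hW.re_dotProduct_nonneg x
      calc c⁻¹ * Complex.normSq (star x ⬝ᵥ u)
          ≤ c⁻¹ * ((star x ⬝ᵥ W *ᵥ x).re * c) := by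
            apply mul_le_mul_of_nonneg_left hcs (by positivity)
        _ = (star x ⬝ᵥ W *ᵥ x).re := by field_simp
  constructor
  · refine .of_dotProduct_mulVec_nonneg (hW.1.sub (herm_vmv _)) fun x => ?_
    rw [sub_mulVec, dotProduct_sub, quad x]
    have him := (Complex.nonneg_iff.mp (hW.dotProduct_mulVec_nonneg x)).2
    have hxre : star x ⬝ᵥ W *ᵥ x = (((star x ⬝ᵥ W *ᵥ x).re : ℝ) : ℂ) :=
      Complex.ext rfl (by simpa using him.symm)
    rw [hxre, ← Complex.ofReal_sub, Complex.zero_le_real]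
    exact sub_nonneg.2 (bound x)
  · rw [quad h, hch]
    rw [Complex.normSq_ofReal]
    rcases eq_or_lt_of_le hc0 with hc | hc
    · rw [← hc]; norm_num
    · have ht : r ^ 2 = c⁻¹ := by rw [hrdef, inv_pow, Real.sq_sqrt hc0]
      rw [ht]
      congr 1
      field_simp

/-- Relaxed (SDR) feasible set of problem (SDR2.1) with Type-II receivers: PSD
matrices satisfying the Type-II SINR constraints (no sensing-covariance term) and
the power constraint. -/
def SSDRTypeII {M K : ℕ} (h : Fin K → Fin M → ℂ) (Γ σsq : Fin K → ℝ) (P0 : ℝ) :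
    Set ((Fin K → Matrix (Fin M) (Fin M) ℂ) × Matrix (Fin M) (Fin M) ℂ) :=
  {p | (∀ k, (p.1 k).PosSemidef) ∧ p.2.PosSemidef ∧
    (∀ k, (σsq k : ℂ) ≤ (1 / (Γ k : ℂ)) * (star (h k) ⬝ᵥ p.1 k *ᵥ h k)
      - ∑ i ∈ Finset.univ.erase k, star (h k) ⬝ᵥ p.1 i *ᵥ h k) ∧
    (∑ k, (p.1 k).trace) + p.2.trace ≤ (P0 : ℂ)}

/-- Rank-constrained feasible set of problem (P2.1): additionally `rank Wₖ ≤ 1`. -/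
def SRankOneTypeII {M K : ℕ} (h : Fin K → Fin M → ℂ) (Γ σsq : Fin K → ℝ) (P0 : ℝ) :
    Set ((Fin K → Matrix (Fin M) (Fin M) ℂ) × Matrix (Fin M) (Fin M) ℂ) :=
  {p ∈ SSDRTypeII h Γ σsq P0 | ∀ k, (p.1 k).rank ≤ 1}

/-- The CRB-related objective `tr((G (Σₖ Wₖ + R) Gᴴ)⁻¹)` (a real number for the
feasible PSD arguments). -/
noncomputable def crbObj {M N K : ℕ} (G : Matrix (Fin N) (Fin M) ℂ)
    (p : (Fin K → Matrix (Fin M) (Fin M) ℂ) × Matrix (Fin M) (Fin M) ℂ) : ℝ :=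
  ((G * ((∑ k, p.1 k) + p.2) * Gᴴ)⁻¹).trace.re

/-- Proposition 2: the SDR of the Type-II transmit beamforming problem is tight.  If
`(W̄, R̄)` minimizes the CRB objective over the relaxed set, then the rank-one
reconstruction `(W*, R*)` is feasible for the rank-constrained problem and attains
the same objective value; hence the two problems have the same optimal value. -/
theorem sdr_tight_typeII {M N K : ℕ} (G : Matrix (Fin N) (Fin M) ℂ)
    (h : Fin K → Fin M → ℂ) (Γ σsq : Fin K → ℝ) (P0 : ℝ)
    (hΓ : ∀ k, 0 < Γ k) (hσ : ∀ k, 0 < σsq k) (hP : 0 < P0)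
    (Wb : Fin K → Matrix (Fin M) (Fin M) ℂ) (Rb : Matrix (Fin M) (Fin M) ℂ)
    (hfeas : (Wb, Rb) ∈ SSDRTypeII h Γ σsq P0)
    (hmin : ∀ p ∈ SSDRTypeII h Γ σsq P0, crbObj G (Wb, Rb) ≤ crbObj G p)
    (hinv : IsUnit (G * ((∑ k, Wb k) + Rb) * Gᴴ)) :
    let w : Fin K → Fin M → ℂ := fun k =>
      (((Real.sqrt ((star (h k) ⬝ᵥ Wb k *ᵥ h k).re))⁻¹ : ℝ) : ℂ) • (Wb k *ᵥ h k)
    let Wstar : Fin K → Matrix (Fin M) (Fin M) ℂ := fun k => vecMulVec (w k) (star (w k))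
    let Rstar : Matrix (Fin M) (Fin M) ℂ := Rb + ∑ k, (Wb k - Wstar k)
    (Wstar, Rstar) ∈ SRankOneTypeII h Γ σsq P0 ∧
      crbObj G (Wstar, Rstar) = crbObj G (Wb, Rb) ∧
      sInf (crbObj G '' SRankOneTypeII h Γ σsq P0) =
        sInf (crbObj G '' SSDRTypeII h Γ σsq P0) := by
  intro w Wstar Rstar
  obtain ⟨hWbPSD, hRbPSD, hSINR, hPow⟩ := hfeas
  have hdiffPSD : ∀ k, (Wb k - Wstar k).PosSemidef := fun k => (key (hWbPSD k) (h k)).1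
  have heqk : ∀ k, star (h k) ⬝ᵥ Wstar k *ᵥ h k = star (h k) ⬝ᵥ Wb k *ᵥ h k :=
    fun k => (key (hWbPSD k) (h k)).2
  have hle : ∀ k i, star (h k) ⬝ᵥ Wstar i *ᵥ h k ≤ star (h k) ⬝ᵥ Wb i *ᵥ h k := by
    intro k i
    have h0 := (hdiffPSD i).dotProduct_mulVec_nonneg (h k)
    rw [sub_mulVec, dotProduct_sub] at h0
    exact sub_nonneg.mp h0
  have memS : (Wstar, Rstar) ∈ SSDRTypeII h Γ σsq P0 := by
    refine ⟨fun k => psd_vmv (w k), ?_, ?_, ?_⟩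
    · exact hRbPSD.add <| Finset.sum_induction _ _ (fun a b ha hb => ha.add hb)
        Matrix.PosSemidef.zero (fun k _ => hdiffPSD k)
    · intro k
      refine (hSINR k).trans ?_
      rw [show star (h k) ⬝ᵥ ((Wstar, Rstar).1 k) *ᵥ h k = star (h k) ⬝ᵥ Wb k *ᵥ h k
        from heqk k]
      exact sub_le_sub_left (Finset.sum_le_sum fun i _ => hle k i) _
    · have htr : (∑ k, (Wstar k).trace) + Rstar.trace
          = (∑ k, (Wb k).trace) + Rb.trace := by
        show (∑ k, (Wstar k).trace) + (Rb + ∑ k, (Wb k - Wstar k)).trace = _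
        rw [trace_add, trace_sum]
        simp only [trace_sub, Finset.sum_sub_distrib]
        ring
      show (∑ k, (Wstar k).trace) + Rstar.trace ≤ (P0 : ℂ)
      rw [htr]
      exact hPow
  have hrank : ∀ k, (Wstar k).rank ≤ 1 := by
    intro k
    rw [show Wstar k = vecMulVec (w k) (star (w k)) from rfl, vecMulVec_eq (Fin 1)]
    exact (rank_mul_le_left _ _).trans ((rank_le_card_width _).trans (by simp))
  have memS2 : (Wstar, Rstar) ∈ SRankOneTypeII h Γ σsq P0 := ⟨memS, hrank⟩
  have hsum : (∑ k, Wstar k) + Rstar = (∑ k, Wb k) + Rb := by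
    show (∑ k, Wstar k) + (Rb + ∑ k, (Wb k - Wstar k)) = _
    rw [Finset.sum_sub_distrib]
    abel
  have hobj : crbObj G (Wstar, Rstar) = crbObj G (Wb, Rb) := by
    simp only [crbObj]
    rw [hsum]
  have hfeas' : (Wb, Rb) ∈ SSDRTypeII h Γ σsq P0 := ⟨hWbPSD, hRbPSD, hSINR, hPow⟩
  have hv1 : IsLeast (crbObj G '' SSDRTypeII h Γ σsq P0) (crbObj G (Wb, Rb)) :=
    ⟨⟨(Wb, Rb), hfeas', rfl⟩, by rintro y ⟨p, hp, rfl⟩; exact hmin p hp⟩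
  have hv2 : IsLeast (crbObj G '' SRankOneTypeII h Γ σsq P0) (crbObj G (Wb, Rb)) :=
    ⟨⟨(Wstar, Rstar), memS2, hobj⟩, by rintro y ⟨p, hp, rfl⟩; exact hmin p hp.1⟩
  exact ⟨memS2, hobj, by rw [hv2.csInf_eq, hv1.csInf_eq]⟩
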